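/- If R' is a 2-torsion free semiprime ring, then every surjective Jordan homomorphism φ : R → R' is the sum of a homomorphism and an antihomomorphism on the commutator ideal K of R. -/
import Mathlib


/-- An additive map `φ` between (possibly non-unital) associative rings is a
Jordan homomorphism if `φ(x²) = φ(x)²` and `φ(xyx) = φ(x)φ(y)φ(x)`. -/
def IsJordanHom {R R' : Type*} [NonUnitalRing R] [NonUnitalRing R'] (φ : R → R') : Prop :=
  (∀ x y : R, φ (x + y) = φ x + φ y) ∧
  (∀ x : R, φ (x * x) = φ x * φ x) ∧
  (∀ x y : R, φ (x * y * x) = φ x * φ y * φ x)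

/-- `R'_φ`: the (non-unital) subring of `R'` generated by the image of `φ`. -/
def rngGen {R R' : Type*} [NonUnitalRing R] [NonUnitalRing R'] (φ : R → R') :
    NonUnitalSubring R' :=
  NonUnitalSubring.closure (Set.range φ)

/-- `V_φ`: the two-sided ideal of `R'_φ` generated by all `{x,y} = φ(xy) − φ(x)φ(y)`. -/
def Vphi {R R' : Type*} [NonUnitalRing R] [NonUnitalRing R'] (φ : R → R') :
    TwoSidedIdeal (rngGen φ) :=
  TwoSidedIdeal.span {a : rngGen φ | ∃ x y : R, (a : R') = φ (x * y) - φ x * φ y}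

/-- `W_φ`: the two-sided ideal of `R'_φ` generated by all `⟨x,y⟩ = φ(xy) − φ(y)φ(x)`. -/
def Wphi {R R' : Type*} [NonUnitalRing R] [NonUnitalRing R'] (φ : R → R') :
    TwoSidedIdeal (rngGen φ) :=
  TwoSidedIdeal.span {a : rngGen φ | ∃ x y : R, (a : R') = φ (x * y) - φ y * φ x}

/-- `φ` is splittable if `V_φ ∩ W_φ = {0}`. -/
def Splittable {R R' : Type*} [NonUnitalRing R] [NonUnitalRing R'] (φ : R → R') : Prop :=
  Vphi φ ⊓ Wphi φ = ⊥

/-- The commutator ideal of `R`: the two-sided ideal generated by all `xy − yx`. -/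
def commutatorIdeal (R : Type*) [NonUnitalRing R] : TwoSidedIdeal R :=
  TwoSidedIdeal.span {z : R | ∃ x y : R, z = x * y - y * x}

/-- `φ` is the sum of the homomorphism `φ₁` and the antihomomorphism `φ₂` on the ideal
`I` of `R`; here `φ₁, φ₂ : R → R'_φ` are only constrained on `I`. -/
def IsSumHomAntihomWith {R R' : Type*} [NonUnitalRing R] [NonUnitalRing R']
    (φ : R → R') (I : TwoSidedIdeal R) (φ₁ φ₂ : R → rngGen φ) : Prop :=
  (∀ u ∈ I, ∀ v ∈ I, φ₁ (u + v) = φ₁ u + φ₁ v) ∧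
  (∀ u ∈ I, ∀ v ∈ I, φ₂ (u + v) = φ₂ u + φ₂ v) ∧
  (∀ u ∈ I, ∀ v ∈ I, φ₁ (u * v) = φ₁ u * φ₁ v) ∧
  (∀ u ∈ I, ∀ v ∈ I, φ₂ (u * v) = φ₂ v * φ₂ u) ∧
  (∀ u ∈ I, φ u = (φ₁ u : R') + (φ₂ u : R')) ∧
  (∃ J₁ J₂ : TwoSidedIdeal (rngGen φ),
    (∀ u ∈ I, φ₁ u ∈ J₁) ∧ (∀ u ∈ I, φ₂ u ∈ J₂) ∧ J₁ ⊓ J₂ = ⊥) ∧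
  (∀ u ∈ I, ∀ x : R, (φ₁ (u * x) : R') = (φ₁ u : R') * φ x ∧
      (φ₁ (x * u) : R') = φ x * (φ₁ u : R')) ∧
  (∀ u ∈ I, ∀ x : R, (φ₂ (u * x) : R') = φ x * (φ₂ u : R') ∧
      (φ₂ (x * u) : R') = (φ₂ u : R') * φ x)

/-- `φ` is the sum of a homomorphism and an antihomomorphism on the ideal `I` of `R`. -/
def IsSumHomAntihomOn {R R' : Type*} [NonUnitalRing R] [NonUnitalRing R']
    (φ : R → R') (I : TwoSidedIdeal R) : Prop :=
  ∃ φ₁ φ₂ : R → rngGen φ, IsSumHomAntihomWith φ I φ₁ φ₂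

/-- A ring is semiprime if `I² = {0}` implies `I = {0}` for every (two-sided) ideal `I`. -/
def IsSemiprimeRing (A : Type*) [NonUnitalRing A] : Prop :=
  ∀ I : TwoSidedIdeal A, (∀ x ∈ I, ∀ y ∈ I, x * y = 0) → I = ⊥



section SP
variable {A : Type*} [NonUnitalRing A]

private lemma sp_aux (hsp : IsSemiprimeRing A) {c : A}
    (h1 : ∀ m, c * m * c = 0) (h2 : c * c = 0) : c = 0 := by
  set I := TwoSidedIdeal.span {c} with hIdef
  have CL : ∀ v ∈ I, c * v = 0 ∧ ∀ m, c * m * v = 0 := by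
    intro v hv
    let D : TwoSidedIdeal A := TwoSidedIdeal.mk'
      {v : A | c * v = 0 ∧ ∀ m, c * m * v = 0}
      ⟨by simp, fun m => by simp⟩
      (fun {x y} hx hy => ⟨by rw [mul_add, hx.1, hy.1, add_zero],
        fun m => by rw [mul_add, hx.2 m, hy.2 m, add_zero]⟩)
      (fun {x} hx => ⟨by rw [mul_neg, hx.1, neg_zero],
        fun m => by rw [mul_neg, hx.2 m, neg_zero]⟩)
      (fun {x y} hy => ⟨by rw [← mul_assoc, hy.2 x],
        fun m => by rw [← mul_assoc, mul_assoc c m x, hy.2 (m * x)]⟩)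
      (fun {x y} hx => ⟨by rw [← mul_assoc, hx.1, zero_mul],
        fun m => by rw [← mul_assoc, hx.2 m, zero_mul]⟩)
    have hm : v ∈ D := TwoSidedIdeal.mem_span_iff.1 hv D
      (by intro z hz
          simp only [Set.mem_singleton_iff] at hz
          subst hz
          show z ∈ D
          rw [show D = _ from rfl, TwoSidedIdeal.mem_mk']
          exact ⟨h2, h1⟩)
    rwa [show D = _ from rfl, TwoSidedIdeal.mem_mk'] at hm
  have prodzero : ∀ u ∈ I, ∀ v ∈ I, u * v = 0 := by
    intro u hu
    let E : TwoSidedIdeal A := TwoSidedIdeal.mk'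
      {u : A | ∀ v ∈ I, u * v = 0}
      (fun v _ => by simp)
      (fun {x y} hx hy v hv => by rw [add_mul, hx v hv, hy v hv, add_zero])
      (fun {x} hx v hv => by rw [neg_mul, hx v hv, neg_zero])
      (fun {x y} hy v hv => by rw [mul_assoc, hy v hv, mul_zero])
      (fun {x y} hx v hv => by rw [mul_assoc]; exact hx _ (I.mul_mem_left y v hv))
    have hm : u ∈ E := TwoSidedIdeal.mem_span_iff.1 hu E
      (by intro z hz
          simp only [Set.mem_singleton_iff] at hz
          subst hz
          show z ∈ E
          rw [show E = _ from rfl, TwoSidedIdeal.mem_mk']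
          exact fun v hv => (CL v hv).1)
    rwa [show E = _ from rfl, TwoSidedIdeal.mem_mk'] at hm
  have hbot : I = ⊥ := hsp I prodzero
  have hc : c ∈ I := TwoSidedIdeal.subset_span rfl
  rw [hbot, TwoSidedIdeal.mem_bot] at hc
  exact hc

private lemma sp_main (hsp : IsSemiprimeRing A) {c : A}
    (h1 : ∀ m, c * m * c = 0) : c = 0 := by
  have h2 : c * c = 0 := by
    apply sp_aux hsp (c := c * c)
    · intro m
      have e : c * c * m * (c * c) = c * (c * m * c * c) := by simp only [mul_assoc]
      rw [e, h1 m, zero_mul, mul_zero]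
    · have e : c * c * (c * c) = c * (c * c) * c := by simp only [mul_assoc]
      rw [e, h1]
  exact sp_aux hsp h1 h2

private lemma lemT (htf : ∀ a : A, a + a = 0 → a = 0) (hsp : IsSemiprimeRing A)
    {a b : A} (h : ∀ m, a * m * b + b * m * a = 0) : ∀ m, a * m * b = 0 := by
  have hr : ∀ m, b * m * a = -(a * m * b) := fun m => eq_neg_of_add_eq_zero_right (h m)
  have hl : ∀ m, a * m * b = -(b * m * a) := fun m => eq_neg_of_add_eq_zero_left (h m)
  have key : ∀ m n, a * m * (a * n * b) = 0 := by
    intro m n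
    have e1 : a * m * (b * n * a) = -(a * m * (a * n * b)) := by
      rw [hr n, mul_neg]
    have e2 : a * m * (b * n * a) = a * m * (a * n * b) := by
      calc a * m * (b * n * a) = a * m * b * n * a := by simp only [mul_assoc]
        _ = -(b * m * a) * n * a := by rw [hl m]
        _ = -(b * (m * a * n) * a) := by simp only [neg_mul, mul_assoc]
        _ = -(-(a * (m * a * n) * b)) := by rw [hr (m * a * n)]
        _ = a * m * (a * n * b) := by simp only [neg_neg, mul_assoc]
    have h2 : a * m * (a * n * b) + a * m * (a * n * b) = 0 :=
      add_eq_zero_iff_eq_neg.2 (e2 ▸ e1)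
    exact htf _ h2
  have key2 : ∀ m n, a * m * (b * n * a) = 0 := fun m n => by
    rw [hr n, mul_neg, key, neg_zero]
  intro x
  apply sp_main hsp
  intro y
  have e : a * x * b * y * (a * x * b) = a * x * (b * y * a) * (x * b) := by
    simp only [mul_assoc]
  rw [e, key2, zero_mul]

end SP



section JH
variable {R R' : Type*} [NonUnitalRing R] [NonUnitalRing R']

private def eps (φ : R → R') (x y : R) : R' := φ (x * y) - φ x * φ y
private def dlt (φ : R → R') (x y : R) : R' := φ (x * y) - φ y * φ x

variable {φ : R → R'}

private lemma phi_zero (hφ : IsJordanHom φ) : φ 0 = 0 := by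
  have := hφ.1 0 0
  simpa using this.symm

private lemma lin_sq (hφ : IsJordanHom φ) (x y : R) : φ (x * y + y * x) = φ x * φ y + φ y * φ x := by
  have hadd := hφ.1
  have hsq := hφ.2.1
  have h1 : φ (x * x) + φ (x * y + y * x) + φ (y * y) = (φ x + φ y) * (φ x + φ y) := by
    rw [← hadd, ← hadd, show x * x + (x * y + y * x) + y * y = (x + y) * (x + y) by
      simp only [mul_add, add_mul]; abel, hsq, hadd]
  rw [hsq x, hsq y] at h1
  have h3 : (φ x + φ y) * (φ x + φ y)
      = φ x * φ x + (φ x * φ y + φ y * φ x) + φ y * φ y := by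
    simp only [mul_add, add_mul]; abel
  rw [h3] at h1
  exact add_left_cancel (add_right_cancel h1)

private lemma lin_tr (hφ : IsJordanHom φ) (a b c : R) :
    φ (a * b * c + c * b * a) = φ a * φ b * φ c + φ c * φ b * φ a := by
  have hadd := hφ.1
  have htr := hφ.2.2
  have h1 : φ (a * b * a) + φ (a * b * c + c * b * a) + φ (c * b * c)
      = (φ a + φ c) * φ b * (φ a + φ c) := by
    rw [← hadd, ← hadd, show a * b * a + (a * b * c + c * b * a) + c * b * c
      = (a + c) * b * (a + c) by simp only [mul_add, add_mul]; abel, htr, hadd]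
  rw [htr a b, htr c b] at h1
  have h3 : (φ a + φ c) * φ b * (φ a + φ c)
      = φ a * φ b * φ a + (φ a * φ b * φ c + φ c * φ b * φ a) + φ c * φ b * φ c := by
    simp only [mul_add, add_mul]; abel
  rw [h3] at h1
  exact add_left_cancel (add_right_cancel h1)

private lemma phi_swap (hφ : IsJordanHom φ) (x y : R) : φ (y * x) = φ x * φ y + φ y * φ x - φ (x * y) := by
  have h := lin_sq hφ x y
  rw [hφ.1] at h
  exact eq_sub_of_add_eq' h

private lemma phi_sub (hφ : IsJordanHom φ) (x y : R) : φ (x - y) = φ x - φ y := by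
  have hadd := hφ.1
  have hneg : φ (-y) = -φ y := by
    have h := hadd y (-y)
    rw [add_neg_cancel, phi_zero hφ] at h
    exact (eq_neg_of_add_eq_zero_right h.symm)
  rw [sub_eq_add_neg, hadd, hneg, ← sub_eq_add_neg]

private lemma eps_addl (hφ : IsJordanHom φ) (x u y : R) : eps φ (x + u) y = eps φ x y + eps φ u y := by
  have hadd := hφ.1
  simp only [eps, add_mul, hadd]; abel

private lemma eps_addr (hφ : IsJordanHom φ) (x y v : R) : eps φ x (y + v) = eps φ x y + eps φ x v := by
  have hadd := hφ.1
  simp only [eps, mul_add, hadd]; abel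

private lemma dlt_addl (hφ : IsJordanHom φ) (x u y : R) : dlt φ (x + u) y = dlt φ x y + dlt φ u y := by
  have hadd := hφ.1
  simp only [dlt, add_mul, mul_add, hadd]; abel

private lemma dlt_addr (hφ : IsJordanHom φ) (x y v : R) : dlt φ x (y + v) = dlt φ x y + dlt φ x v := by
  have hadd := hφ.1
  simp only [dlt, mul_add, add_mul, hadd]; abel

private lemma Bmain (hφ : IsJordanHom φ) (hsurj : Function.Surjective φ) (x y : R) (m : R') :
    eps φ x y * m * dlt φ x y + dlt φ x y * m * eps φ x y = 0 := by
  have hadd := hφ.1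
  have hsq := hφ.2.1
  have htr := hφ.2.2
  obtain ⟨z, rfl⟩ := hsurj m
  set p := φ (x * y) with hp
  set a := φ x * φ y with ha
  set b := φ y * φ x with hb
  set m := φ z with hm
  have hq : φ (y * x) = a + b - p := phi_swap hφ x y
  have A1 : φ ((x * y) * z * (y * x) + (y * x) * z * (x * y))
      = p * m * φ (y * x) + φ (y * x) * m * p := lin_tr hφ _ _ _
  have A2 : (x * y) * z * (y * x) = x * (y * z * y) * x := by simp only [mul_assoc]
  have A3 : (y * x) * z * (x * y) = y * (x * z * x) * y := by simp only [mul_assoc]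
  have A4 : φ ((x * y) * z * (y * x) + (y * x) * z * (x * y)) = a * m * b + b * m * a := by
    rw [hadd, A2, A3, htr x (y * z * y), htr y (x * z * x), htr y z, htr x z]
    simp only [ha, hb, hm, mul_assoc]
  have E : p * m * (a + b - p) + (a + b - p) * m * p = a * m * b + b * m * a := by
    rw [← hq, ← A1, A4]
  have expand : eps φ x y * m * dlt φ x y + dlt φ x y * m * eps φ x y
      = (a * m * b + b * m * a) - (p * m * (a + b - p) + (a + b - p) * m * p) := by
    show (p - a) * m * (p - b) + (p - b) * m * (p - a) = _
    simp only [sub_mul, mul_sub, mul_add, add_mul]; abel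
  rw [expand, E, sub_self]

end JH

section Chain
variable {R R' : Type*} [NonUnitalRing R] [NonUnitalRing R'] {φ : R → R'}
variable (hφ : IsJordanHom φ) (hsurj : Function.Surjective φ)
variable (htf : ∀ a : R', a + a = 0 → a = 0) (hsp : IsSemiprimeRing R')

private lemma ED0 (hφ : IsJordanHom φ) (hsurj : Function.Surjective φ)
    (htf : ∀ a : R', a + a = 0 → a = 0) (hsp : IsSemiprimeRing R')
    (x y : R) : ∀ m : R', eps φ x y * m * dlt φ x y = 0 :=
  lemT htf hsp (Bmain hφ hsurj x y)

private lemma DE0 (hφ : IsJordanHom φ) (hsurj : Function.Surjective φ)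
    (htf : ∀ a : R', a + a = 0 → a = 0) (hsp : IsSemiprimeRing R')
    (x y : R) : ∀ m : R', dlt φ x y * m * eps φ x y = 0 := by
  intro m
  have h := Bmain hφ hsurj x y m
  rw [ED0 hφ hsurj htf hsp x y m, zero_add] at h
  exact h

private lemma EDshared (hφ : IsJordanHom φ) (hsurj : Function.Surjective φ)
    (htf : ∀ a : R', a + a = 0 → a = 0) (hsp : IsSemiprimeRing R')
    (x u y : R) : ∀ m : R', eps φ x y * m * dlt φ u y = 0 := by
  intro m
  have lin : eps φ x y * m * dlt φ u y + eps φ u y * m * dlt φ x y = 0 := by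
    have h0 := ED0 hφ hsurj htf hsp (x + u) y m
    rw [eps_addl hφ, dlt_addl hφ] at h0
    simp only [add_mul, mul_add] at h0
    rw [ED0 hφ hsurj htf hsp x y m, ED0 hφ hsurj htf hsp u y m] at h0
    simpa [add_comm] using h0
  apply sp_main hsp
  intro n
  have hneg : eps φ x y * m * dlt φ u y = -(eps φ u y * m * dlt φ x y) :=
    eq_neg_of_add_eq_zero_left lin
  have e : eps φ x y * m * dlt φ u y * n * (eps φ u y * m * dlt φ x y)
      = eps φ x y * m * (dlt φ u y * n * eps φ u y) * (m * dlt φ x y) := by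
    simp only [mul_assoc]
  rw [DE0 hφ hsurj htf hsp u y n, mul_zero, zero_mul] at e
  nth_rewrite 2 [hneg]
  rw [mul_neg, e, neg_zero]

private lemma DEshared (hφ : IsJordanHom φ) (hsurj : Function.Surjective φ)
    (htf : ∀ a : R', a + a = 0 → a = 0) (hsp : IsSemiprimeRing R')
    (x u y : R) : ∀ m : R', dlt φ x y * m * eps φ u y = 0 := by
  intro m
  have lin : dlt φ x y * m * eps φ u y + dlt φ u y * m * eps φ x y = 0 := by
    have h0 := DE0 hφ hsurj htf hsp (x + u) y m
    rw [eps_addl hφ, dlt_addl hφ] at h0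
    simp only [add_mul, mul_add] at h0
    rw [DE0 hφ hsurj htf hsp x y m, DE0 hφ hsurj htf hsp u y m] at h0
    simpa [add_comm] using h0
  apply sp_main hsp
  intro n
  have hneg : dlt φ x y * m * eps φ u y = -(dlt φ u y * m * eps φ x y) :=
    eq_neg_of_add_eq_zero_left lin
  have e : dlt φ x y * m * eps φ u y * n * (dlt φ u y * m * eps φ x y)
      = dlt φ x y * m * (eps φ u y * n * dlt φ u y) * (m * eps φ x y) := by
    simp only [mul_assoc]
  rw [ED0 hφ hsurj htf hsp u y n, mul_zero, zero_mul] at e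
  nth_rewrite 2 [hneg]
  rw [mul_neg, e, neg_zero]

private lemma EDfull (hφ : IsJordanHom φ) (hsurj : Function.Surjective φ)
    (htf : ∀ a : R', a + a = 0 → a = 0) (hsp : IsSemiprimeRing R')
    (x y u v : R) : ∀ m : R', eps φ x y * m * dlt φ u v = 0 := by
  intro m
  have lin : eps φ x y * m * dlt φ u v + eps φ x v * m * dlt φ u y = 0 := by
    have h0 := EDshared hφ hsurj htf hsp x u (y + v) m
    rw [eps_addr hφ, dlt_addr hφ] at h0
    simp only [add_mul, mul_add] at h0
    rw [EDshared hφ hsurj htf hsp x u y m, EDshared hφ hsurj htf hsp x u v m] at h0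
    simpa [add_comm] using h0
  apply sp_main hsp
  intro n
  have hneg : eps φ x y * m * dlt φ u v = -(eps φ x v * m * dlt φ u y) :=
    eq_neg_of_add_eq_zero_left lin
  have e : eps φ x y * m * dlt φ u v * n * (eps φ x v * m * dlt φ u y)
      = eps φ x y * m * (dlt φ u v * n * eps φ x v) * (m * dlt φ u y) := by
    simp only [mul_assoc]
  rw [DEshared hφ hsurj htf hsp u x v n, mul_zero, zero_mul] at e
  nth_rewrite 2 [hneg]
  rw [mul_neg, e, neg_zero]

private lemma DEfull (hφ : IsJordanHom φ) (hsurj : Function.Surjective φ)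
    (htf : ∀ a : R', a + a = 0 → a = 0) (hsp : IsSemiprimeRing R')
    (x y u v : R) : ∀ m : R', dlt φ x y * m * eps φ u v = 0 := by
  intro m
  have lin : dlt φ x y * m * eps φ u v + dlt φ x v * m * eps φ u y = 0 := by
    have h0 := DEshared hφ hsurj htf hsp x u (y + v) m
    rw [eps_addr hφ, dlt_addr hφ] at h0
    simp only [add_mul, mul_add] at h0
    rw [DEshared hφ hsurj htf hsp x u y m, DEshared hφ hsurj htf hsp x u v m] at h0
    simpa [add_comm] using h0
  apply sp_main hsp
  intro n
  have hneg : dlt φ x y * m * eps φ u v = -(dlt φ x v * m * eps φ u y) :=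
    eq_neg_of_add_eq_zero_left lin
  have e : dlt φ x y * m * eps φ u v * n * (dlt φ x v * m * eps φ u y)
      = dlt φ x y * m * (eps φ u v * n * dlt φ x v) * (m * eps φ u y) := by
    simp only [mul_assoc]
  rw [EDshared hφ hsurj htf hsp u x v n, mul_zero, zero_mul] at e
  nth_rewrite 2 [hneg]
  rw [mul_neg, e, neg_zero]

private lemma EDnomid (hφ : IsJordanHom φ) (hsurj : Function.Surjective φ)
    (htf : ∀ a : R', a + a = 0 → a = 0) (hsp : IsSemiprimeRing R')
    (x y u v : R) : eps φ x y * dlt φ u v = 0 := by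
  apply sp_main hsp
  intro n
  have e : eps φ x y * dlt φ u v * n * (eps φ x y * dlt φ u v)
      = eps φ x y * (dlt φ u v * n * eps φ x y) * dlt φ u v := by
    simp only [mul_assoc]
  rw [DEfull hφ hsurj htf hsp u v x y n, mul_zero, zero_mul] at e
  exact e

private lemma DEnomid (hφ : IsJordanHom φ) (hsurj : Function.Surjective φ)
    (htf : ∀ a : R', a + a = 0 → a = 0) (hsp : IsSemiprimeRing R')
    (x y u v : R) : dlt φ x y * eps φ u v = 0 := by
  apply sp_main hsp
  intro n
  have e : dlt φ x y * eps φ u v * n * (dlt φ x y * eps φ u v)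
      = dlt φ x y * (eps φ u v * n * dlt φ x y) * eps φ u v := by
    simp only [mul_assoc]
  rw [EDfull hφ hsurj htf hsp u v x y n, mul_zero, zero_mul] at e
  exact e

end Chain

section Orth
variable {R R' : Type*} [NonUnitalRing R] [NonUnitalRing R'] {φ : R → R'}

private lemma orth (hφ : IsJordanHom φ) (hsurj : Function.Surjective φ)
    (htf : ∀ a : R', a + a = 0 → a = 0) (hsp : IsSemiprimeRing R') :
    ∀ v ∈ Vphi φ, ∀ w ∈ Wphi φ,
      (((v : R') * w = 0 ∧ (w : R') * v = 0) ∧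
        ∀ m : R', (v : R') * m * w = 0 ∧ (w : R') * m * (v : R') = 0) := by
  intro v hv
  -- Step 1: `v` annihilates all δ-generators, with arbitrary middles.
  have hA : ∀ (s t : R), (((v : R') * dlt φ s t = 0 ∧ dlt φ s t * (v : R') = 0) ∧
      ∀ m : R', (v : R') * m * dlt φ s t = 0 ∧ dlt φ s t * m * (v : R') = 0) := by
    let CA : TwoSidedIdeal (rngGen φ) := TwoSidedIdeal.mk'
      {a : rngGen φ | ∀ (s t : R), (((a : R') * dlt φ s t = 0 ∧ dlt φ s t * (a : R') = 0) ∧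
        ∀ m : R', (a : R') * m * dlt φ s t = 0 ∧ dlt φ s t * m * (a : R') = 0)}
      (by intro s t; refine ⟨⟨?_, ?_⟩, fun m => ⟨?_, ?_⟩⟩ <;> simp)
      (by intro x y hx hy s t
          refine ⟨⟨?_, ?_⟩, fun m => ⟨?_, ?_⟩⟩
          · show ((x : R') + (y : R')) * dlt φ s t = 0
            rw [add_mul, ((hx s t).1).1, ((hy s t).1).1, add_zero]
          · show dlt φ s t * ((x : R') + (y : R')) = 0
            rw [mul_add, ((hx s t).1).2, ((hy s t).1).2, add_zero]
          · show ((x : R') + (y : R')) * m * dlt φ s t = 0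
            rw [add_mul, add_mul, ((hx s t).2 m).1, ((hy s t).2 m).1, add_zero]
          · show dlt φ s t * m * ((x : R') + (y : R')) = 0
            rw [mul_add, ((hx s t).2 m).2, ((hy s t).2 m).2, add_zero])
      (by intro x hx s t
          refine ⟨⟨?_, ?_⟩, fun m => ⟨?_, ?_⟩⟩
          · show (-(x : R')) * dlt φ s t = 0
            rw [neg_mul, ((hx s t).1).1, neg_zero]
          · show dlt φ s t * (-(x : R')) = 0
            rw [mul_neg, ((hx s t).1).2, neg_zero]
          · show (-(x : R')) * m * dlt φ s t = 0
            rw [neg_mul, neg_mul, ((hx s t).2 m).1, neg_zero]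
          · show dlt φ s t * m * (-(x : R')) = 0
            rw [mul_neg, ((hx s t).2 m).2, neg_zero])
      (by intro x y hy s t
          refine ⟨⟨?_, ?_⟩, fun m => ⟨?_, ?_⟩⟩
          · show (x : R') * (y : R') * dlt φ s t = 0
            rw [mul_assoc, ((hy s t).1).1, mul_zero]
          · show dlt φ s t * ((x : R') * (y : R')) = 0
            rw [← mul_assoc]
            exact ((hy s t).2 (x : R')).2
          · show (x : R') * (y : R') * m * dlt φ s t = 0
            rw [mul_assoc (x : R') (y : R') m, mul_assoc, ((hy s t).2 m).1, mul_zero]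
          · show dlt φ s t * m * ((x : R') * (y : R')) = 0
            rw [← mul_assoc, mul_assoc (dlt φ s t) m (x : R')]
            exact ((hy s t).2 (m * (x : R'))).2)
      (by intro x y hx s t
          refine ⟨⟨?_, ?_⟩, fun m => ⟨?_, ?_⟩⟩
          · show (x : R') * (y : R') * dlt φ s t = 0
            exact ((hx s t).2 (y : R')).1
          · show dlt φ s t * ((x : R') * (y : R')) = 0
            rw [← mul_assoc, ((hx s t).1).2, zero_mul]
          · show (x : R') * (y : R') * m * dlt φ s t = 0
            rw [mul_assoc (x : R') (y : R') m]
            exact ((hx s t).2 ((y : R') * m)).1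
          · show dlt φ s t * m * ((x : R') * (y : R')) = 0
            rw [← mul_assoc, ((hx s t).2 m).2, zero_mul])
    have hm : v ∈ CA := by
      refine TwoSidedIdeal.mem_span_iff.1 hv CA ?_
      rintro a ⟨x0, y0, hc⟩
      show a ∈ CA
      rw [show CA = _ from rfl, TwoSidedIdeal.mem_mk']
      intro s t
      have hc' : (a : R') = eps φ x0 y0 := hc
      refine ⟨⟨?_, ?_⟩, fun m => ⟨?_, ?_⟩⟩
      · rw [hc']; exact EDnomid hφ hsurj htf hsp x0 y0 s t
      · rw [hc']; exact DEnomid hφ hsurj htf hsp s t x0 y0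
      · rw [hc']; exact EDfull hφ hsurj htf hsp x0 y0 s t m
      · rw [hc']; exact DEfull hφ hsurj htf hsp s t x0 y0 m
    rwa [show CA = _ from rfl, TwoSidedIdeal.mem_mk'] at hm
  -- Step 2: induction over `w ∈ Wphi`.
  intro w hw
  let CB : TwoSidedIdeal (rngGen φ) := TwoSidedIdeal.mk'
    {b : rngGen φ | (((v : R') * b = 0 ∧ (b : R') * v = 0) ∧
      ∀ m : R', (v : R') * m * b = 0 ∧ (b : R') * m * (v : R') = 0)}
    (by refine ⟨⟨?_, ?_⟩, fun m => ⟨?_, ?_⟩⟩ <;> simp)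
    (by intro x y hx hy
        refine ⟨⟨?_, ?_⟩, fun m => ⟨?_, ?_⟩⟩
        · show (v : R') * ((x : R') + (y : R')) = 0
          rw [mul_add, hx.1.1, hy.1.1, add_zero]
        · show ((x : R') + (y : R')) * v = 0
          rw [add_mul, hx.1.2, hy.1.2, add_zero]
        · show (v : R') * m * ((x : R') + (y : R')) = 0
          rw [mul_add, (hx.2 m).1, (hy.2 m).1, add_zero]
        · show ((x : R') + (y : R')) * m * (v : R') = 0
          rw [add_mul, add_mul, (hx.2 m).2, (hy.2 m).2, add_zero])
    (by intro x hx
        refine ⟨⟨?_, ?_⟩, fun m => ⟨?_, ?_⟩⟩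
        · show (v : R') * (-(x : R')) = 0
          rw [mul_neg, hx.1.1, neg_zero]
        · show (-(x : R')) * v = 0
          rw [neg_mul, hx.1.2, neg_zero]
        · show (v : R') * m * (-(x : R')) = 0
          rw [mul_neg, (hx.2 m).1, neg_zero]
        · show (-(x : R')) * m * (v : R') = 0
          rw [neg_mul, neg_mul, (hx.2 m).2, neg_zero])
    (by intro x y hy
        refine ⟨⟨?_, ?_⟩, fun m => ⟨?_, ?_⟩⟩
        · show (v : R') * ((x : R') * (y : R')) = 0
          rw [← mul_assoc]
          exact (hy.2 (x : R')).1
        · show (x : R') * (y : R') * (v : R') = 0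
          rw [mul_assoc, hy.1.2, mul_zero]
        · show (v : R') * m * ((x : R') * (y : R')) = 0
          rw [← mul_assoc, mul_assoc (v : R') m (x : R')]
          exact (hy.2 (m * (x : R'))).1
        · show (x : R') * (y : R') * m * (v : R') = 0
          rw [mul_assoc (x : R') (y : R') m, mul_assoc, (hy.2 m).2, mul_zero])
    (by intro x y hx
        refine ⟨⟨?_, ?_⟩, fun m => ⟨?_, ?_⟩⟩
        · show (v : R') * ((x : R') * (y : R')) = 0
          rw [← mul_assoc, hx.1.1, zero_mul]
        · show (x : R') * (y : R') * (v : R') = 0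
          exact (hx.2 (y : R')).2
        · show (v : R') * m * ((x : R') * (y : R')) = 0
          rw [← mul_assoc, (hx.2 m).1, zero_mul]
        · show (x : R') * (y : R') * m * (v : R') = 0
          rw [mul_assoc (x : R') (y : R') m]
          exact (hx.2 ((y : R') * m)).2)
  have hm : w ∈ CB := by
    refine TwoSidedIdeal.mem_span_iff.1 hw CB ?_
    rintro b ⟨x0, y0, hc⟩
    show b ∈ CB
    rw [show CB = _ from rfl, TwoSidedIdeal.mem_mk']
    have hc' : (b : R') = dlt φ x0 y0 := hc
    refine ⟨⟨?_, ?_⟩, fun m => ⟨?_, ?_⟩⟩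
    · rw [hc']; exact ((hA x0 y0).1).1
    · rw [hc']; exact ((hA x0 y0).1).2
    · rw [hc']; exact ((hA x0 y0).2 m).1
    · rw [hc']; exact ((hA x0 y0).2 m).2
  rwa [show CB = _ from rfl, TwoSidedIdeal.mem_mk'] at hm

end Orth

section Main
variable {R R' : Type*} [NonUnitalRing R] [NonUnitalRing R'] {φ : R → R'}

private lemma phi_neg (hφ : IsJordanHom φ) (x : R) : φ (-x) = -φ x := by
  have h := hφ.1 x (-x)
  rw [add_neg_cancel, phi_zero hφ] at h
  exact eq_neg_of_add_eq_zero_right h.symm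

private lemma phi_mul_eps (x y : R) : φ (x * y) = eps φ x y + φ x * φ y := by
  simp [eps]

private lemma phi_mul_dlt (x y : R) : φ (x * y) = dlt φ x y + φ y * φ x := by
  simp [dlt]

private def IsSumHomAntihomWith' {R R' : Type*} [NonUnitalRing R] [NonUnitalRing R']
    (φ : R → R') (I : TwoSidedIdeal R) (φ₁ φ₂ : R → rngGen φ) : Prop :=
  (∀ u ∈ I, ∀ v ∈ I, φ₁ (u + v) = φ₁ u + φ₁ v) ∧
  (∀ u ∈ I, ∀ v ∈ I, φ₂ (u + v) = φ₂ u + φ₂ v) ∧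
  (∀ u ∈ I, ∀ v ∈ I, φ₁ (u * v) = φ₁ u * φ₁ v) ∧
  (∀ u ∈ I, ∀ v ∈ I, φ₂ (u * v) = φ₂ v * φ₂ u) ∧
  (∀ u ∈ I, φ u = (φ₁ u : R') + (φ₂ u : R')) ∧
  (∃ J₁ J₂ : TwoSidedIdeal (rngGen φ),
    (∀ u ∈ I, φ₁ u ∈ J₁) ∧ (∀ u ∈ I, φ₂ u ∈ J₂) ∧ J₁ ⊓ J₂ = ⊥) ∧
  (∀ u ∈ I, ∀ x : R, (φ₁ (u * x) : R') = (φ₁ u : R') * φ x ∧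
      (φ₁ (x * u) : R') = φ x * (φ₁ u : R')) ∧
  (∀ u ∈ I, ∀ x : R, (φ₂ (u * x) : R') = φ x * (φ₂ u : R') ∧
      (φ₂ (x * u) : R') = (φ₂ u : R') * φ x)

private theorem main_thm
    (hφ : IsJordanHom φ) (hsurj : Function.Surjective φ)
    (htf : ∀ a : R', a + a = 0 → a = 0) (hsp : IsSemiprimeRing R') :
    ∃ φ₁ φ₂ : R → rngGen φ, IsSumHomAntihomWith' φ (commutatorIdeal R) φ₁ φ₂ := by
  classical
  have hadd := hφ.1
  have memS : ∀ a : R', a ∈ rngGen φ := by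
    intro a
    obtain ⟨x, rfl⟩ := hsurj a
    exact NonUnitalSubring.subset_closure ⟨x, rfl⟩
  have epsV : ∀ x y : R, (⟨eps φ x y, memS _⟩ : rngGen φ) ∈ Vphi φ :=
    fun x y => TwoSidedIdeal.subset_span ⟨x, y, rfl⟩
  have dltW : ∀ x y : R, (⟨dlt φ x y, memS _⟩ : rngGen φ) ∈ Wphi φ :=
    fun x y => TwoSidedIdeal.subset_span ⟨x, y, rfl⟩
  have horth := orth hφ hsurj htf hsp
  -- uniqueness of (V, W)-decompositions
  have hzero : ∀ d : rngGen φ, d ∈ Vphi φ → d ∈ Wphi φ → d = 0 := by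
    intro d hdV hdW
    refine Subtype.ext (sp_main hsp fun m => ?_)
    exact ((horth d hdV d hdW).2 m).1
  have uniq : ∀ v₁ w₁ v₂ w₂ : rngGen φ, v₁ ∈ Vphi φ → w₁ ∈ Wphi φ → v₂ ∈ Vphi φ →
      w₂ ∈ Wphi φ → (v₁ : R') + w₁ = (v₂ : R') + w₂ → v₁ = v₂ ∧ w₁ = w₂ := by
    intro v₁ w₁ v₂ w₂ hv1 hw1 hv2 hw2 heq
    have hd : v₁ - v₂ = w₂ - w₁ := by
      refine Subtype.ext ?_
      show (v₁ : R') - v₂ = (w₂ : R') - w₁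
      rw [sub_eq_sub_iff_add_eq_add, heq, add_comm]
    have hdV : v₁ - v₂ ∈ Vphi φ := (Vphi φ).sub_mem hv1 hv2
    have hdW : v₁ - v₂ ∈ Wphi φ := by rw [hd]; exact (Wphi φ).sub_mem hw2 hw1
    have h0 := hzero _ hdV hdW
    have hv : v₁ = v₂ := by
      have := sub_eq_zero.1 h0
      exact this
    refine ⟨hv, ?_⟩
    have h0' : w₂ - w₁ = 0 := by rw [← hd]; exact h0
    exact (sub_eq_zero.1 h0').symm
  -- the splitting of Vphi and Wphi
  have hbotWV : Wphi φ ⊓ Vphi φ = ⊥ := by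
    rw [eq_bot_iff]
    intro t ht
    rw [TwoSidedIdeal.mem_inf] at ht
    rw [TwoSidedIdeal.mem_bot]
    exact hzero t ht.2 ht.1
  -- existence of decompositions on the commutator ideal
  set P : R → Prop := fun u => ∃ p : rngGen φ × rngGen φ,
      p.1 ∈ Vphi φ ∧ p.2 ∈ Wphi φ ∧ φ u = (p.1 : R') + p.2 with hPdef
  have hPK : ∀ u ∈ commutatorIdeal R, P u := by
    intro u hu
    let PI : TwoSidedIdeal R := TwoSidedIdeal.mk' {u : R | P u}
      (⟨(0, 0), (Vphi φ).zero_mem, (Wphi φ).zero_mem, by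
        rw [phi_zero hφ]; show (0 : R') = (0 : R') + (0 : R'); rw [add_zero]⟩)
      (by rintro x y ⟨p, hp1, hp2, hpe⟩ ⟨q, hq1, hq2, hqe⟩
          refine ⟨(p.1 + q.1, p.2 + q.2), (Vphi φ).add_mem hp1 hq1,
            (Wphi φ).add_mem hp2 hq2, ?_⟩
          show φ (x + y) = ((p.1 : R') + q.1) + ((p.2 : R') + q.2)
          rw [hadd, hpe, hqe]; abel)
      (by rintro x ⟨p, hp1, hp2, hpe⟩
          refine ⟨(-p.1, -p.2), (Vphi φ).neg_mem hp1, (Wphi φ).neg_mem hp2, ?_⟩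
          show φ (-x) = (-(p.1 : R')) + (-(p.2 : R'))
          rw [phi_neg hφ, hpe]; abel)
      (by rintro x y ⟨p, hp1, hp2, hpe⟩
          refine ⟨(⟨eps φ x y, memS _⟩ + ⟨φ x, memS _⟩ * p.1, ⟨φ x, memS _⟩ * p.2),
            (Vphi φ).add_mem (epsV x y) ((Vphi φ).mul_mem_left _ _ hp1),
            (Wphi φ).mul_mem_left _ _ hp2, ?_⟩
          show φ (x * y) = (eps φ x y + φ x * (p.1 : R')) + φ x * (p.2 : R')
          rw [phi_mul_eps (φ := φ) _ _, hpe, mul_add, add_assoc])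
      (by rintro x y ⟨p, hp1, hp2, hpe⟩
          refine ⟨(⟨eps φ x y, memS _⟩ + p.1 * ⟨φ y, memS _⟩, p.2 * ⟨φ y, memS _⟩),
            (Vphi φ).add_mem (epsV x y) ((Vphi φ).mul_mem_right _ _ hp1),
            (Wphi φ).mul_mem_right _ _ hp2, ?_⟩
          show φ (x * y) = (eps φ x y + (p.1 : R') * φ y) + (p.2 : R') * φ y
          rw [phi_mul_eps (φ := φ) _ _, hpe, add_mul, add_assoc])
    have hm : u ∈ PI := by
      refine TwoSidedIdeal.mem_span_iff.1 hu PI ?_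
      rintro z ⟨x, y, rfl⟩
      show _ ∈ PI
      rw [show PI = _ from rfl, TwoSidedIdeal.mem_mk']
      refine ⟨(⟨eps φ x y, memS _⟩, ⟨dlt φ x y, memS _⟩), epsV x y, dltW x y, ?_⟩
      show φ (x * y - y * x) = eps φ x y + dlt φ x y
      rw [phi_sub hφ, phi_swap hφ x y]
      show _ = (φ (x * y) - φ x * φ y) + (φ (x * y) - φ y * φ x)
      abel
    rwa [show PI = _ from rfl, TwoSidedIdeal.mem_mk'] at hm
  -- define the two component maps by choice
  refine ⟨fun u => if h : P u then h.choose.2 else 0,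
          fun u => if h : P u then h.choose.1 else 0, ?_, ?_, ?_, ?_, ?_, ?_, ?_, ?_⟩
  case _ => -- φ₁ additive
    intro u hu v hv
    have hu' := hPK u hu; have hv' := hPK v hv
    have hs' := hPK (u + v) ((commutatorIdeal R).add_mem hu hv)
    simp only [dif_pos hu', dif_pos hv', dif_pos hs']
    obtain ⟨hA1, hA2, hAe⟩ := hu'.choose_spec
    obtain ⟨hB1, hB2, hBe⟩ := hv'.choose_spec
    refine (uniq _ _ _ _ hs'.choose_spec.1 hs'.choose_spec.2.1
      ((Vphi φ).add_mem hA1 hB1) ((Wphi φ).add_mem hA2 hB2) ?_).2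
    rw [← hs'.choose_spec.2.2]
    show φ (u + v) = ((hu'.choose.1 : R') + hv'.choose.1) +
      ((hu'.choose.2 : R') + hv'.choose.2)
    conv_lhs => rw [hadd, hAe, hBe]
    abel
  case _ => -- φ₂ additive
    intro u hu v hv
    have hu' := hPK u hu; have hv' := hPK v hv
    have hs' := hPK (u + v) ((commutatorIdeal R).add_mem hu hv)
    simp only [dif_pos hu', dif_pos hv', dif_pos hs']
    obtain ⟨hA1, hA2, hAe⟩ := hu'.choose_spec
    obtain ⟨hB1, hB2, hBe⟩ := hv'.choose_spec
    refine (uniq _ _ _ _ hs'.choose_spec.1 hs'.choose_spec.2.1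
      ((Vphi φ).add_mem hA1 hB1) ((Wphi φ).add_mem hA2 hB2) ?_).1
    rw [← hs'.choose_spec.2.2]
    show φ (u + v) = ((hu'.choose.1 : R') + hv'.choose.1) +
      ((hu'.choose.2 : R') + hv'.choose.2)
    conv_lhs => rw [hadd, hAe, hBe]
    abel
  case _ => -- φ₁ multiplicative
    intro u hu v hv
    have hu' := hPK u hu; have hv' := hPK v hv
    have hs' := hPK (u * v) ((commutatorIdeal R).mul_mem_left u v hv)
    simp only [dif_pos hu', dif_pos hv', dif_pos hs']
    obtain ⟨hA1, hA2, hAe⟩ := hu'.choose_spec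
    obtain ⟨hB1, hB2, hBe⟩ := hv'.choose_spec
    refine (uniq hs'.choose.1 hs'.choose.2
      (⟨eps φ u v, memS _⟩ + hu'.choose.1 * hv'.choose.1)
      (hu'.choose.2 * hv'.choose.2)
      hs'.choose_spec.1 hs'.choose_spec.2.1
      ((Vphi φ).add_mem (epsV u v) ((Vphi φ).mul_mem_right _ _ hA1))
      ((Wphi φ).mul_mem_right _ _ hA2) ?_).2
    rw [← hs'.choose_spec.2.2]
    show φ (u * v) = (eps φ u v + (hu'.choose.1 : R') * hv'.choose.1) +
      (hu'.choose.2 : R') * hv'.choose.2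
    conv_lhs => rw [phi_mul_eps (φ := φ) u v, hAe, hBe, mul_add, add_mul, add_mul,
      (horth _ hA1 _ hB2).1.1, (horth _ hB1 _ hA2).1.2]
    abel
  case _ => -- φ₂ antimultiplicative
    intro u hu v hv
    have hu' := hPK u hu; have hv' := hPK v hv
    have hs' := hPK (u * v) ((commutatorIdeal R).mul_mem_left u v hv)
    simp only [dif_pos hu', dif_pos hv', dif_pos hs']
    obtain ⟨hA1, hA2, hAe⟩ := hu'.choose_spec
    obtain ⟨hB1, hB2, hBe⟩ := hv'.choose_spec
    refine (uniq hs'.choose.1 hs'.choose.2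
      (hv'.choose.1 * hu'.choose.1)
      (⟨dlt φ u v, memS _⟩ + hv'.choose.2 * hu'.choose.2)
      hs'.choose_spec.1 hs'.choose_spec.2.1
      ((Vphi φ).mul_mem_right _ _ hB1)
      ((Wphi φ).add_mem (dltW u v) ((Wphi φ).mul_mem_right _ _ hB2)) ?_).1
    rw [← hs'.choose_spec.2.2]
    show φ (u * v) = (hv'.choose.1 : R') * hu'.choose.1 +
      (dlt φ u v + (hv'.choose.2 : R') * hu'.choose.2)
    conv_lhs => rw [phi_mul_dlt (φ := φ) u v, hAe, hBe, mul_add, add_mul, add_mul,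
      (horth _ hB1 _ hA2).1.1, (horth _ hA1 _ hB2).1.2]
    abel
  case _ => -- φ = φ₁ + φ₂ on K
    intro u hu
    have hu' := hPK u hu
    simp only [dif_pos hu', dif_pos hu']
    conv_lhs => rw [hu'.choose_spec.2.2]
    exact add_comm _ _
  case _ => -- the ideals
    refine ⟨Wphi φ, Vphi φ, fun u hu => ?_, fun u hu => ?_, hbotWV⟩
    · simp only [dif_pos (hPK u hu)]; exact (hPK u hu).choose_spec.2.1
    · simp only [dif_pos (hPK u hu)]; exact (hPK u hu).choose_spec.1
  case _ => -- φ₁ module conditions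
    intro u hu x
    have hu' := hPK u hu
    obtain ⟨hA1, hA2, hAe⟩ := hu'.choose_spec
    constructor
    · have hs' := hPK (u * x) ((commutatorIdeal R).mul_mem_right u x hu)
      simp only [dif_pos hu', dif_pos hs']
      have := (uniq hs'.choose.1 hs'.choose.2
        (⟨eps φ u x, memS _⟩ + hu'.choose.1 * ⟨φ x, memS _⟩)
        (hu'.choose.2 * ⟨φ x, memS _⟩)
        hs'.choose_spec.1 hs'.choose_spec.2.1
        ((Vphi φ).add_mem (epsV u x) ((Vphi φ).mul_mem_right _ _ hA1))
        ((Wphi φ).mul_mem_right _ _ hA2) ?_).2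
      · rw [this]; rfl
      · rw [← hs'.choose_spec.2.2]
        show φ (u * x) = (eps φ u x + (hu'.choose.1 : R') * φ x) +
          (hu'.choose.2 : R') * φ x
        conv_lhs => rw [phi_mul_eps (φ := φ) u x, hAe, add_mul]
        abel
    · have hs' := hPK (x * u) ((commutatorIdeal R).mul_mem_left x u hu)
      simp only [dif_pos hu', dif_pos hs']
      have := (uniq hs'.choose.1 hs'.choose.2
        (⟨eps φ x u, memS _⟩ + (⟨φ x, memS _⟩ : rngGen φ) * hu'.choose.1)
        ((⟨φ x, memS _⟩ : rngGen φ) * hu'.choose.2)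
        hs'.choose_spec.1 hs'.choose_spec.2.1
        ((Vphi φ).add_mem (epsV x u) ((Vphi φ).mul_mem_left _ _ hA1))
        ((Wphi φ).mul_mem_left _ _ hA2) ?_).2
      · rw [this]; rfl
      · rw [← hs'.choose_spec.2.2]
        show φ (x * u) = (eps φ x u + φ x * (hu'.choose.1 : R')) +
          φ x * (hu'.choose.2 : R')
        conv_lhs => rw [phi_mul_eps (φ := φ) x u, hAe, mul_add]
        abel
  case _ => -- φ₂ module conditions
    intro u hu x
    have hu' := hPK u hu
    obtain ⟨hA1, hA2, hAe⟩ := hu'.choose_spec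
    constructor
    · have hs' := hPK (u * x) ((commutatorIdeal R).mul_mem_right u x hu)
      simp only [dif_pos hu', dif_pos hs']
      have := (uniq hs'.choose.1 hs'.choose.2
        ((⟨φ x, memS _⟩ : rngGen φ) * hu'.choose.1)
        (⟨dlt φ u x, memS _⟩ + (⟨φ x, memS _⟩ : rngGen φ) * hu'.choose.2)
        hs'.choose_spec.1 hs'.choose_spec.2.1
        ((Vphi φ).mul_mem_left _ _ hA1)
        ((Wphi φ).add_mem (dltW u x) ((Wphi φ).mul_mem_left _ _ hA2)) ?_).1
      · rw [this]; rfl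
      · rw [← hs'.choose_spec.2.2]
        show φ (u * x) = φ x * (hu'.choose.1 : R') +
          (dlt φ u x + φ x * (hu'.choose.2 : R'))
        conv_lhs => rw [phi_mul_dlt (φ := φ) u x, hAe, mul_add]
        abel
    · have hs' := hPK (x * u) ((commutatorIdeal R).mul_mem_left x u hu)
      simp only [dif_pos hu', dif_pos hs']
      have := (uniq hs'.choose.1 hs'.choose.2
        (hu'.choose.1 * ⟨φ x, memS _⟩)
        (⟨dlt φ x u, memS _⟩ + hu'.choose.2 * ⟨φ x, memS _⟩)
        hs'.choose_spec.1 hs'.choose_spec.2.1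
        ((Vphi φ).mul_mem_right _ _ hA1)
        ((Wphi φ).add_mem (dltW x u) ((Wphi φ).mul_mem_right _ _ hA2)) ?_).1
      · rw [this]; rfl
      · rw [← hs'.choose_spec.2.2]
        show φ (x * u) = (hu'.choose.1 : R') * φ x +
          (dlt φ x u + (hu'.choose.2 : R') * φ x)
        conv_lhs => rw [phi_mul_dlt (φ := φ) x u, hAe, add_mul]
        abel
end Main


/-- If `R'` is a 2-torsion free semiprime ring, then every surjective Jordan
homomorphism `φ : R → R'` is the sum of a homomorphism and an antihomomorphism on
the commutator ideal `K` of `R`. -/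
theorem surjective_jordanHom_sum_on_commutatorIdeal
    {R R' : Type*} [NonUnitalRing R] [NonUnitalRing R']
    (φ : R → R') (hφ : IsJordanHom φ) (hsurj : Function.Surjective φ)
    (htf : ∀ a : R', a + a = 0 → a = 0) (hsp : IsSemiprimeRing R') :
    IsSumHomAntihomOn φ (commutatorIdeal R) := by
  exact main_thm hφ hsurj htf hsp
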